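/- Let GeLU(x) = x·Φ(x) with Φ the standard normal cumulative distribution function, and let ReLU(x) = max(x, 0). Then for every x ∈ ℝ, |ReLU(x) − GeLU(x)| ≤ e^{-x²/2}. -/

import Mathlib

/-- The standard normal cumulative distribution function
`Φ(x) = (1/√(2π)) ∫_{-∞}^x e^{-t²/2} dt`. -/
noncomputable def stdNormalCDF (x : ℝ) : ℝ :=
  (1 / Real.sqrt (2 * Real.pi)) * ∫ t in Set.Iic x, Real.exp (-(t ^ 2) / 2)

/-- The GeLU activation function `GeLU(x) = x·Φ(x)`. -/
noncomputable def gelu (x : ℝ) : ℝ := x * stdNormalCDF x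

/-- The ReLU activation function `ReLU(x) = max(x, 0)`. -/
def relu (x : ℝ) : ℝ := max x 0

/-!
Since `Φ(x) + Φ(-x) = 1`, the function `ReLU - GeLU` is even, so it suffices to treat `x ≤ 0`,
where it equals `-x Φ(x) ≥ 0`. Because `-x ≤ -t` for `t ≤ x`, the Mills-ratio estimate
`-x ∫_{-∞}^x e^{-t²/2} dt ≤ ∫_{-∞}^x (-t) e^{-t²/2} dt = e^{-x²/2}` holds,
and `√(2π) ≥ 1` finishes the bound.
-/

open MeasureTheory Set Real

lemma exp_neg_sq_div_two_eq (t : ℝ) : exp (-(t ^ 2) / 2) = exp (-(1 / 2) * t ^ 2) := by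
  ring_nf

lemma integrable_exp_neg_sq_div_two : Integrable fun t : ℝ => exp (-(t ^ 2) / 2) := by
  simpa only [exp_neg_sq_div_two_eq] using
    integrable_exp_neg_mul_sq (by norm_num : (0 : ℝ) < 1 / 2)

lemma integrable_neg_mul_exp_neg_sq_div_two :
    Integrable fun t : ℝ => -t * exp (-(t ^ 2) / 2) := by
  simpa only [exp_neg_sq_div_two_eq, neg_mul] using
    (integrable_mul_exp_neg_mul_sq (by norm_num : (0 : ℝ) < 1 / 2)).fun_neg

lemma integral_exp_neg_sq_div_two : ∫ t : ℝ, exp (-(t ^ 2) / 2) = √(2 * π) := by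
  simp only [exp_neg_sq_div_two_eq, integral_gaussian]
  rw [div_div_eq_mul_div, div_one, mul_comm]

lemma hasDerivAt_exp_neg_sq_div_two (t : ℝ) :
    HasDerivAt (fun t : ℝ => exp (-(t ^ 2) / 2)) (-t * exp (-(t ^ 2) / 2)) t := by
  have h : HasDerivAt (fun t : ℝ => -(t ^ 2) / 2) (-t) t :=
    ((hasDerivAt_pow 2 t).fun_neg.div_const 2).congr_deriv (by ring)
  simpa only [mul_comm] using h.exp

lemma integral_Iic_neg_mul_exp_neg_sq_div_two (x : ℝ) :
    ∫ t in Iic x, -t * exp (-(t ^ 2) / 2) = exp (-(x ^ 2) / 2) := by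
  have hderiv : ∀ t ∈ Iic x, HasDerivAt (fun t : ℝ => exp (-(t ^ 2) / 2))
      (-t * exp (-(t ^ 2) / 2)) t := fun t _ => hasDerivAt_exp_neg_sq_div_two t
  have hint := integrable_neg_mul_exp_neg_sq_div_two.integrableOn (s := Iic x)
  have hlim := tendsto_zero_of_hasDerivAt_of_integrableOn_Iic hderiv hint
    integrable_exp_neg_sq_div_two.integrableOn
  simpa using integral_Iic_of_hasDerivAt_of_tendsto' hderiv hint hlim

lemma neg_mul_integral_Iic_exp_neg_sq_div_two_le (x : ℝ) :
    -x * ∫ t in Iic x, exp (-(t ^ 2) / 2) ≤ exp (-(x ^ 2) / 2) := by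
  rw [← integral_Iic_neg_mul_exp_neg_sq_div_two x, ← integral_const_mul]
  refine setIntegral_mono_on (integrable_exp_neg_sq_div_two.integrableOn.const_mul _)
    integrable_neg_mul_exp_neg_sq_div_two.integrableOn measurableSet_Iic fun t (ht : t ≤ x) => ?_
  exact mul_le_mul_of_nonneg_right (by linarith) (exp_pos _).le

lemma one_le_sqrt_two_mul_pi : 1 ≤ √(2 * π) :=
  one_le_sqrt.mpr (by linarith [pi_gt_three])

lemma stdNormalCDF_nonneg (x : ℝ) : 0 ≤ stdNormalCDF x :=
  mul_nonneg (by positivity) (setIntegral_nonneg measurableSet_Iic fun _ _ => (exp_pos _).le)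

lemma stdNormalCDF_add_stdNormalCDF_neg (x : ℝ) : stdNormalCDF x + stdNormalCDF (-x) = 1 := by
  have hreflect : ∫ t in Iic (-x), exp (-(t ^ 2) / 2) = ∫ t in Ioi x, exp (-(t ^ 2) / 2) := by
    refine (integral_comp_neg_Ioi x fun t : ℝ => exp (-(t ^ 2) / 2)).symm.trans ?_
    simp only [neg_sq]
  have hsplit := intervalIntegral.integral_Iic_add_Ioi (b := x)
    integrable_exp_neg_sq_div_two.integrableOn integrable_exp_neg_sq_div_two.integrableOn
  rw [stdNormalCDF, stdNormalCDF, hreflect, ← mul_add, hsplit, integral_exp_neg_sq_div_two]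
  exact one_div_mul_cancel (by positivity)

lemma relu_sub_gelu_neg (x : ℝ) : relu (-x) - gelu (-x) = relu x - gelu x := by
  have hrelu : relu x - relu (-x) = x := max_zero_sub_max_neg_zero_eq_self x
  have hgelu : gelu x - gelu (-x) = x := by
    rw [gelu, gelu]
    linear_combination x * stdNormalCDF_add_stdNormalCDF_neg x
  linarith

lemma neg_mul_stdNormalCDF_le (x : ℝ) : -x * stdNormalCDF x ≤ exp (-(x ^ 2) / 2) :=
  calc -x * stdNormalCDF x
      = (1 / √(2 * π)) * (-x * ∫ t in Iic x, exp (-(t ^ 2) / 2)) := by rw [stdNormalCDF]; ring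
    _ ≤ (1 / √(2 * π)) * exp (-(x ^ 2) / 2) := by
      gcongr
      exact neg_mul_integral_Iic_exp_neg_sq_div_two_le x
    _ ≤ exp (-(x ^ 2) / 2) := by
      refine mul_le_of_le_one_left (exp_pos _).le ?_
      exact div_le_one_of_le₀ one_le_sqrt_two_mul_pi (sqrt_nonneg _)

/-- For every real `x`, `|ReLU(x) − GeLU(x)| ≤ e^{-x²/2}`. -/
theorem abs_relu_sub_gelu_le (x : ℝ) :
    |relu x - gelu x| ≤ Real.exp (-(x ^ 2) / 2) := by
  wlog hx : x ≤ 0 generalizing x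
  · simpa only [relu_sub_gelu_neg, neg_sq] using this (-x) (by linarith)
  have hgelu : gelu x ≤ 0 := mul_nonpos_of_nonpos_of_nonneg hx (stdNormalCDF_nonneg x)
  rw [relu, max_eq_right hx, zero_sub, abs_neg, abs_of_nonpos hgelu, gelu, ← neg_mul]
  exact neg_mul_stdNormalCDF_le x
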